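/- Let φ be a metric formula over 𝒜 in the plain-rule fragment, i.e., built by the grammar φ ::= ⊥ | ⊤ | a | 𝗜 | 𝗙 | ◯_{[0..ω)} a | ¬φ | φ∧φ | φ∨φ | (φ ← φ) with a ∈ 𝒜 (so the only temporal operator is the next operator with interval [0..ω), applied to atoms). Let M be a timed HT-trace of length λ over 𝒜 and 0 ≤ k < λ. If M,k ⊨ φ, then θ(M) ⊨ σ_k(φ). -/
import Mathlib


namespace MetricASP

/-- Metric intervals `[m..n)` with `n = none` standing for `ω`. -/
structure Interval : Type where
  m : ℕ
  n : Option ℕ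

/-- `x ∈ [m..n)` iff `m ≤ x` and (`n = ω` or `x < n`). -/
def Interval.mem (I : Interval) (x : ℕ) : Prop :=
  I.m ≤ x ∧ ∀ nn ∈ I.n, x < nn

/-- The interval `[0..ω)`. -/
def fullInterval : Interval := ⟨0, none⟩

/-- Metric formulas over an alphabet `α`. -/
inductive MF (α : Type) : Type
  | fls
  | atom (a : α)
  | conj (φ ψ : MF α)
  | disj (φ ψ : MF α)
  | impl (φ ψ : MF α)
  | init
  | next (I : Interval) (φ : MF α)
  | always (I : Interval) (φ : MF α)
  | evt (I : Interval) (φ : MF α)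

def MF.neg {α : Type} (φ : MF α) : MF α := .impl φ .fls
def MF.top {α : Type} : MF α := MF.neg .fls
def MF.fin {α : Type} : MF α := MF.neg (.next fullInterval MF.top)

/-- Timing function wrt `lam`. -/
def IsTiming (lam : ℕ) (τ : ℕ → ℕ) : Prop :=
  τ 0 = 0 ∧ ∀ k, k + 1 < lam → τ k < τ (k + 1)

/-- `H i ⊆ T i` for all relevant indices. -/
def IsTrace {α : Type} (lam : ℕ) (H T : ℕ → Set α) : Prop :=
  ∀ i, i < lam → H i ⊆ T i

/-- Satisfaction of a metric formula by a timed HT-trace of length `lam`. -/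
def MSat {α : Type} (lam : ℕ) (τ : ℕ → ℕ) :
    (ℕ → Set α) → (ℕ → Set α) → ℕ → MF α → Prop
  | _, _, _, .fls => False
  | H, _, k, .atom a => a ∈ H k
  | H, T, k, .conj φ ψ => MSat lam τ H T k φ ∧ MSat lam τ H T k ψ
  | H, T, k, .disj φ ψ => MSat lam τ H T k φ ∨ MSat lam τ H T k ψ
  | H, T, k, .impl φ ψ =>
      (MSat lam τ H T k φ → MSat lam τ H T k ψ) ∧
      (MSat lam τ T T k φ → MSat lam τ T T k ψ)
  | _, _, k, .init => k = 0
  | H, T, k, .next I φ =>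
      k + 1 < lam ∧ MSat lam τ H T (k + 1) φ ∧ I.mem (τ (k + 1) - τ k)
  | H, T, k, .evt I φ =>
      ∃ i, k ≤ i ∧ i < lam ∧ I.mem (τ i - τ k) ∧ MSat lam τ H T i φ
  | H, T, k, .always I φ =>
      ∀ i, k ≤ i → i < lam → I.mem (τ i - τ k) → MSat lam τ H T i φ

/-- MHT-model of a set of metric formulas. -/
def MHTModels {α : Type} (lam : ℕ) (τ : ℕ → ℕ) (H T : ℕ → Set α)
    (Γ : Set (MF α)) : Prop :=
  ∀ φ ∈ Γ, MSat lam τ H T 0 φ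

/-- Metric equilibrium model (of the total trace given by `T` and `τ`). -/
def MetricEqModel {α : Type} (lam : ℕ) (τ : ℕ → ℕ) (T : ℕ → Set α)
    (Γ : Set (MF α)) : Prop :=
  MHTModels lam τ T T Γ ∧
  ∀ H : ℕ → Set α, IsTrace lam H T → (∃ i, i < lam ∧ H i ≠ T i) →
    ¬ MHTModels lam τ H T Γ

/-- Propositional formulas over atoms `β`. -/
inductive PF (β : Type) : Type
  | fls
  | atom (a : β)
  | and (φ ψ : PF β)
  | or (φ ψ : PF β)
  | imp (φ ψ : PF β)

def PF.neg {β : Type} (φ : PF β) : PF β := .imp φ .fls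
def PF.top {β : Type} : PF β := PF.neg .fls

def bigOr {β : Type} (l : List (PF β)) : PF β := l.foldr .or .fls
def bigAnd {β : Type} (l : List (PF β)) : PF β := l.foldr .and PF.top

/-- Here-and-there satisfaction. -/
def HSat {β : Type} : Set β → Set β → PF β → Prop
  | _, _, .fls => False
  | H, _, .atom a => a ∈ H
  | H, T, .and φ ψ => HSat H T φ ∧ HSat H T ψ
  | H, T, .or φ ψ => HSat H T φ ∨ HSat H T ψ
  | H, T, .imp φ ψ => (HSat H T φ → HSat H T ψ) ∧ (HSat T T φ → HSat T T ψ)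

def HTModels {β : Type} (H T : Set β) (Γ : Set (PF β)) : Prop :=
  ∀ φ ∈ Γ, HSat H T φ

/-- `T` (as the total interpretation `⟨T,T⟩`) is an equilibrium model of `Γ`. -/
def EqModel {β : Type} (T : Set β) (Γ : Set (PF β)) : Prop :=
  HTModels T T Γ ∧ ∀ H : Set β, H ⊂ T → ¬ HTModels H T Γ

/-- Literals over atoms `β`. -/
inductive Lit (β : Type) : Type
  | pos (a : β)
  | neg (a : β)

/-- Body atoms: atoms of the alphabet, `𝗜`, or `𝗙`. -/
inductive BAt (α : Type) : Type
  | atm (a : α)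
  | init
  | fin

/-- A plain metric rule: `□(α ← β)` or `□(◯_I a ← β)`. -/
inductive PlainRule (α : Type) : Type
  | basic (head : List (Lit α)) (body : List (Lit (BAt α)))
  | nxt (I : Interval) (a : α) (body : List (Lit (BAt α)))

def litMF {α β : Type} (f : β → MF α) : Lit β → MF α
  | .pos a => f a
  | .neg a => MF.neg (f a)

def BAt.mf {α : Type} : BAt α → MF α
  | .atm a => .atom a
  | .init => .init
  | .fin => MF.fin

def headMF {α : Type} (l : List (Lit α)) : MF α :=
  (l.map (litMF MF.atom)).foldr .disj .fls

def bodyMF {α : Type} (l : List (Lit (BAt α))) : MF α :=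
  (l.map (litMF BAt.mf)).foldr .conj MF.top

/-- The metric formula corresponding to a plain metric rule. -/
def PlainRule.mf {α : Type} : PlainRule α → MF α
  | .basic h b => .always fullInterval (.impl (bodyMF b) (headMF h))
  | .nxt I a b => .always fullInterval (.impl (bodyMF b) (.next I (.atom a)))

/-- Atoms of the translated propositional language: `a_k` and `t_{k,d}`. -/
inductive XA (α : Type) : Type
  | av (a : α) (k : ℕ)
  | tv (k d : ℕ)

def sigLit {β γ : Type} (f : β → PF γ) : Lit β → PF γ
  | .pos a => f a
  | .neg a => PF.neg (f a)

def sigBAt {α : Type} (lam k : ℕ) : BAt α → PF (XA α)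
  | .atm a => .atom (.av a k)
  | .init => if k = 0 then PF.top else .fls
  | .fin => if k = lam - 1 then PF.top else .fls

def sigBody {α : Type} (lam k : ℕ) (b : List (Lit (BAt α))) : PF (XA α) :=
  (b.map (sigLit (sigBAt lam k))).foldr .and PF.top

def sigHead {α : Type} (k : ℕ) (h : List (Lit α)) : PF (XA α) :=
  (h.map (sigLit (fun a => PF.atom (XA.av a k)))).foldr .or .fls

/-- The translation `σ_k` of a plain metric rule. -/
def sigRule {α : Type} (lam k : ℕ) : PlainRule α → PF (XA α)
  | .basic h b => .imp (sigBody lam k b) (sigHead k h)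
  | .nxt _ a b => .imp (sigBody lam k b)
      (if k = lam - 1 then .fls else .atom (.av a (k + 1)))

/-- `Π_λ(P)`. -/
def PiTheory {α : Type} (lam : ℕ) (P : Set (PlainRule α)) : Set (PF (XA α)) :=
  {φ | ∃ r ∈ P, ∃ k, k < lam ∧ φ = sigRule lam k r}

/-- `Δ_{λ,ν}`. -/
def deltaTheory (α : Type) (lam ν : ℕ) : Set (PF (XA α)) :=
  insert (PF.atom (XA.tv 0 0))
    {φ | ∃ k d, k + 1 < lam ∧ d ≤ ν ∧
      φ = PF.imp (.atom (.tv k d))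
        (bigOr (((List.range (ν + 1)).filter (fun d' => decide (d < d'))).map
          (fun d' => PF.atom (XA.tv (k + 1) d'))))}

/-- `Ψ_{λ,ν}(P)`. -/
def psiTheory {α : Type} (lam ν : ℕ) (P : Set (PlainRule α)) : Set (PF (XA α)) :=
  {φ | ∃ I a b, PlainRule.nxt I a b ∈ P ∧ ∃ k d d', k + 1 < lam ∧ d < d' ∧ d' ≤ ν ∧
    (d' - d < I.m ∨ ∃ nn, I.n = some nn ∧ nn ≤ d' - d) ∧
    φ = PF.imp (.and (sigBody lam k b) (.and (.atom (.tv k d)) (.atom (.tv (k + 1) d')))) .fls}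

/-- The `a_k`-part of `θ(M)` for one component of the trace. -/
def thetaAv {α : Type} (lam : ℕ) (S : ℕ → Set α) : Set (XA α) :=
  {x | ∃ a k, k < lam ∧ a ∈ S k ∧ x = XA.av a k}

/-- The `t_{k,d}`-part `X` of `θ(M)`. -/
def thetaX (α : Type) (lam : ℕ) (τ : ℕ → ℕ) : Set (XA α) :=
  {x | ∃ k, k < lam ∧ x = XA.tv k (τ k)}

/-- One component of `θ(M)`: atoms from the trace component plus `X`. -/
def thetaHT {α : Type} (lam : ℕ) (τ : ℕ → ℕ) (S : ℕ → Set α) : Set (XA α) :=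
  thetaAv lam S ∪ thetaX α lam τ

/-- `⟨H,T⟩` is timed wrt `lam`, with induced timing function `τ`. -/
def TimedHT {α : Type} (lam : ℕ) (H T : Set (XA α)) (τ : ℕ → ℕ) : Prop :=
  IsTiming lam τ ∧
  ∀ k, k < lam → ∀ d, ((XA.tv k d ∈ H) ↔ τ k = d) ∧ ((XA.tv k d ∈ T) ↔ τ k = d)

/-- The plain-rule fragment of metric formulas:
`φ ::= ⊥ | ⊤ | a | 𝗜 | 𝗙 | ◯_{[0..ω)} a | ¬φ | φ∧φ | φ∨φ | (φ ← φ)`. -/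
inductive PlainF (α : Type) : Type
  | fls
  | top
  | atom (a : α)
  | init
  | fin
  | next (a : α)
  | neg (φ : PlainF α)
  | conj (φ ψ : PlainF α)
  | disj (φ ψ : PlainF α)
  | larr (φ ψ : PlainF α)

/-- The metric formula denoted by a plain-fragment formula. -/
def PlainF.mf {α : Type} : PlainF α → MF α
  | .fls => .fls
  | .top => MF.top
  | .atom a => .atom a
  | .init => .init
  | .fin => MF.fin
  | .next a => .next fullInterval (.atom a)
  | .neg φ => MF.neg φ.mf
  | .conj φ ψ => .conj φ.mf ψ.mf
  | .disj φ ψ => .disj φ.mf ψ.mf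
  | .larr φ ψ => .impl ψ.mf φ.mf

/-- The translation `σ_k` on plain-fragment formulas. -/
def PlainF.sig {α : Type} (lam k : ℕ) : PlainF α → PF (XA α)
  | .fls => .fls
  | .top => PF.top
  | .atom a => .atom (.av a k)
  | .init => if k = 0 then PF.top else .fls
  | .fin => if k = lam - 1 then PF.top else .fls
  | .next a => if k = lam - 1 then .fls else .atom (.av a (k + 1))
  | .neg φ => PF.neg (φ.sig lam k)
  | .conj φ ψ => .and (φ.sig lam k) (ψ.sig lam k)
  | .disj φ ψ => .or (φ.sig lam k) (ψ.sig lam k)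
  | .larr φ ψ => .imp (ψ.sig lam k) (φ.sig lam k)


lemma mem_av_thetaHT {α : Type} (lam : ℕ) (τ : ℕ → ℕ) (S : ℕ → Set α)
    (a : α) (k : ℕ) : XA.av a k ∈ thetaHT lam τ S ↔ k < lam ∧ a ∈ S k := by
  constructor
  · rintro (⟨a', k', hk', ha', h⟩ | ⟨k', _, h⟩)
    · cases h; exact ⟨hk', ha'⟩
    · cases h
  · rintro ⟨hk, ha⟩
    exact Or.inl ⟨a, k, hk, ha, rfl⟩

lemma fullInterval_mem (x : ℕ) : fullInterval.mem x :=
  ⟨Nat.zero_le _, by intro nn h; simp [fullInterval] at h⟩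

lemma msat_top {α : Type} (lam : ℕ) (τ : ℕ → ℕ) (H T : ℕ → Set α) (k : ℕ) :
    MSat lam τ H T k MF.top := by
  simp [MF.top, MF.neg, MSat]

lemma key {α : Type} (lam : ℕ) (τ : ℕ → ℕ) (T : ℕ → Set α) (φ : PlainF α) :
    ∀ H : ℕ → Set α, ∀ k, k < lam →
      (HSat (thetaHT lam τ H) (thetaHT lam τ T) (PlainF.sig lam k φ) ↔
        MSat lam τ H T k φ.mf) := by
  induction φ with
  | fls =>
    intro H k hk
    simp [PlainF.sig, PlainF.mf, HSat, MSat]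
  | top =>
    intro H k hk
    simp [PlainF.sig, PlainF.mf, PF.top, PF.neg, MF.top, MF.neg, HSat, MSat]
  | atom a =>
    intro H k hk
    simp [PlainF.sig, PlainF.mf, HSat, MSat, mem_av_thetaHT, hk]
  | init =>
    intro H k hk
    by_cases h : k = 0 <;>
      simp [PlainF.sig, PlainF.mf, PF.top, PF.neg, HSat, MSat, h]
  | fin =>
    intro H k hk
    have hiff : (k = lam - 1) ↔ ¬ (k + 1 < lam) := by omega
    by_cases h : k = lam - 1
    · have h' : ¬ (k + 1 < lam) := hiff.mp h
      simp only [PlainF.sig, PlainF.mf, MF.fin, MF.neg, PF.top, PF.neg, HSat, MSat, h]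
      simp only [← h]
      constructor
      · intro _; exact ⟨fun hc => absurd hc.1 h', fun hc => absurd hc.1 h'⟩
      · intro _; exact ⟨fun x => x.elim, fun x => x.elim⟩
    · have h' : k + 1 < lam := by omega
      simp [PlainF.sig, PlainF.mf, MF.fin, MF.neg, PF.top, PF.neg, HSat, MSat, h, h',
        msat_top, fullInterval_mem]
  | next a =>
    intro H k hk
    by_cases h : k = lam - 1
    · have h' : ¬ (k + 1 < lam) := by omega
      simp only [PlainF.sig, PlainF.mf, HSat, MSat, h, if_pos]
      simp only [← h, HSat]
      constructor
      · intro x; exact x.elim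
      · rintro ⟨hc, -⟩; exact absurd hc h'
    · have h' : k + 1 < lam := by omega
      simp [PlainF.sig, PlainF.mf, HSat, MSat, h, h', mem_av_thetaHT,
        fullInterval_mem]
  | neg φ ih =>
    intro H k hk
    have ihH := ih H k hk
    have ihT := ih T k hk
    simp only [PlainF.sig, PlainF.mf, PF.neg, MF.neg, HSat, MSat, ihH, ihT]
  | conj φ ψ ihφ ihψ =>
    intro H k hk
    simp [PlainF.sig, PlainF.mf, HSat, MSat, ihφ H k hk, ihψ H k hk]
  | disj φ ψ ihφ ihψ =>
    intro H k hk
    simp [PlainF.sig, PlainF.mf, HSat, MSat, ihφ H k hk, ihψ H k hk]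
  | larr φ ψ ihφ ihψ =>
    intro H k hk
    simp only [PlainF.sig, PlainF.mf, HSat, MSat, ihφ H k hk, ihψ H k hk,
      ihφ T k hk, ihψ T k hk]

theorem stmt17 {α : Type} (lam : ℕ) (τ : ℕ → ℕ) (hτ : IsTiming lam τ)
    (H T : ℕ → Set α) (hTr : IsTrace lam H T) (k : ℕ) (hk : k < lam)
    (φ : PlainF α) (hsat : MSat lam τ H T k φ.mf) :
    HSat (thetaHT lam τ H) (thetaHT lam τ T) (φ.sig lam k) :=
  (key lam τ T φ H k hk).mpr hsat

end MetricASP
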